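/- arXiv:2402.17551 — 2 statements merged into one kernel-verified Lean document; each statement's English description precedes it below -/
import Mathlib

section
/- Let P_v(n) be the coefficients of the eighth order mock theta function v(q) = Σ_{n≥0} q^{(n+1)^2} (−q;q^2)_n / (q;q^2)_{n+1} = Σ_{n≥0} P_v(n) q^n. Let p ≥ 3 be a prime such that −2 is a quadratic non-residue modulo p. Then for every integer α ≥ 0, every n ≥ 0, and every j with 1 ≤ j ≤ p−1, P_v(2·p^{2α+2}·n + 2·p^{2α+1}·j + (3·p^{2α+2}+1)/4) ≡ 0 (mod 2). -/
/-- The `n`-th summand of the eighth order mock theta function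
`v(q) = Σ_{n≥0} q^((n+1)^2) (−q;q^2)_n / (q;q^2)_{n+1}`. -/
noncomputable def vTerm (n : ℕ) : PowerSeries ℤ :=
  (PowerSeries.X : PowerSeries ℤ) ^ ((n + 1) ^ 2)
    * (∏ j ∈ Finset.range n, (1 + (PowerSeries.X : PowerSeries ℤ) ^ (2 * j + 1)))
    * Ring.inverse (∏ j ∈ Finset.range (n + 1), (1 - (PowerSeries.X : PowerSeries ℤ) ^ (2 * j + 1)))

/-- `Pv N` is the coefficient of `q^N` in `v(q)`; since the `n`-th summand has order
at least `(n+1)^2 > N` for `n > N`, the partial sum over `n ≤ N` suffices. -/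
noncomputable def Pv (N : ℕ) : ℤ :=
  PowerSeries.coeff N (∑ n ∈ Finset.range (N + 1), vTerm n)

/-! Modulo 2 the factors `1 + q^(2k+1)` and `1 - q^(2k+1)` coincide, so the `n`-th summand of
`v(q)` reduces to `q^((n+1)^2) / (1 - q^(2n+1))` and `P_v(N)` is congruent to the number of `n`
with `2n+1 ∣ N - (n+1)^2`. Through `a = 2n+1` these `n` correspond to the divisors `a` of `4N - 1`
with `a² < 4N - 1`, i.e. to half of all its divisors, since `4N - 1 ≡ 3 (mod 4)` is not a square.
So `P_v(N)` is even iff `d(4N - 1) ≡ 0 (mod 4)`. For the `N` of the theorem,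
`4N - 1 = p^(2α+1) t` with `p ∤ t` and `t ≡ 3p ≡ 5, 7 (mod 8)` not a square, whence
`d(4N - 1) = (2α + 2) d(t)` with `d(t)` even. -/

open PowerSeries Finset

theorem IsUnit.map_ringInverse {M₀ N₀ F : Type*} [MonoidWithZero M₀] [MonoidWithZero N₀]
    [FunLike F M₀ N₀] [MonoidHomClass F M₀ N₀] (f : F) {a : M₀} (ha : IsUnit a) :
    f (Ring.inverse a) = Ring.inverse (f a) := by
  obtain ⟨u, rfl⟩ := ha
  simpa [map_inv] using (Ring.inverse_unit (Units.map (f : M₀ →* N₀) u)).symm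

namespace PowerSeries

instance {R : Type*} [Semiring R] (p : ℕ) [CharP R p] : CharP R⟦X⟧ p :=
  charP_of_injective_ringHom C_injective p

variable {R : Type*} [CommRing R]

theorem one_sub_X_pow_mul_expand_mk_one (d : ℕ) (hd : d ≠ 0) :
    (1 - X ^ d : R⟦X⟧) * expand d hd (mk 1) = 1 := by
  simpa [mul_comm] using congrArg (expand d hd) (mk_one_mul_one_sub_eq_one R)

theorem isUnit_one_sub_X_pow (d : ℕ) (hd : d ≠ 0) : IsUnit (1 - X ^ d : R⟦X⟧) :=
  IsUnit.of_mul_eq_one _ (one_sub_X_pow_mul_expand_mk_one d hd)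

end PowerSeries

theorem map_vTerm_zmod_two (n : ℕ) :
    map (Int.castRingHom (ZMod 2)) (vTerm n) =
      X ^ ((n + 1) ^ 2) * expand (2 * n + 1) (by omega) (mk 1) := by
  have hunit : IsUnit (∏ j ∈ range (n + 1), (1 - X ^ (2 * j + 1) : ℤ⟦X⟧)) :=
    IsUnit.prod_iff.mpr fun j _ => isUnit_one_sub_X_pow _ (by omega)
  rw [vTerm, map_mul, hunit.map_ringInverse, eq_comm,
    Ring.eq_mul_inverse_iff_mul_eq _ _ _ (hunit.map _)]
  simp only [map_mul, map_pow, map_prod, map_add, map_sub, map_one, map_X, prod_range_succ,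
    ← CharTwo.sub_eq_add]
  linear_combination
    (X ^ ((n + 1) ^ 2) * ∏ j ∈ range n, (1 - X ^ (2 * j + 1) : (ZMod 2)⟦X⟧)) *
    one_sub_X_pow_mul_expand_mk_one (R := ZMod 2) (2 * n + 1) (by omega)

theorem Pv_cast_zmod_two (N : ℕ) :
    (Pv N : ZMod 2) =
      #{n ∈ range (N + 1) | (n + 1) ^ 2 ≤ N ∧ 2 * n + 1 ∣ N - (n + 1) ^ 2} := by
  rw [Pv, ← eq_intCast (Int.castRingHom (ZMod 2)), ← coeff_map, map_sum, map_sum, ← sum_boole]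
  refine sum_congr rfl fun n _ => ?_
  rw [map_vTerm_zmod_two, coeff_X_pow_mul', coeff_expand]
  by_cases h : (n + 1) ^ 2 ≤ N <;> simp [h]

theorem Nat.mul_self_mod_eight (r : ℕ) : r * r % 8 = 0 ∨ r * r % 8 = 1 ∨ r * r % 8 = 4 := by
  have := Nat.mod_lt r (by norm_num : 8 > 0)
  interval_cases h : r % 8 <;> simp [Nat.mul_mod, h]

theorem Nat.sq_lt_iff_lt_sq_div {m a : ℕ} (hm : 0 < m) (ha : a ∣ m) :
    a ^ 2 < m ↔ m < (m / a) ^ 2 := by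
  have ha0 : 0 < a := pos_of_dvd_of_pos ha hm
  have hb0 : 0 < m / a := div_pos (le_of_dvd hm ha) ha0
  conv_lhs => rw [← Nat.mul_div_cancel' ha]
  conv_rhs => lhs; rw [← Nat.mul_div_cancel' ha]
  rw [sq, sq, Nat.mul_lt_mul_left ha0, Nat.mul_lt_mul_right hb0]

theorem Nat.card_divisors_eq_two_mul_card_filter_sq_lt {m : ℕ} (hm : ¬IsSquare m) :
    #m.divisors = 2 * #{a ∈ m.divisors | a ^ 2 < m} := by
  have hm0 : 0 < m := by
    rw [Nat.pos_iff_ne_zero]; rintro rfl; exact hm ⟨0, rfl⟩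
  have hcompl : #{a ∈ m.divisors | a ^ 2 < m} = #{a ∈ m.divisors | ¬a ^ 2 < m} := by
    refine card_nbij' (m / ·) (m / ·) ?_ ?_ ?_ ?_ <;> intro a ha <;>
      simp only [coe_filter, Set.mem_ofPred_eq, mem_divisors] at ha ⊢
    · have := (sq_lt_iff_lt_sq_div hm0 ha.1.1).mp ha.2
      exact ⟨⟨div_dvd_of_dvd ha.1.1, hm0.ne'⟩, by omega⟩
    · have hne : a ^ 2 ≠ m := fun h => hm ⟨a, by rw [← h, sq]⟩
      refine ⟨⟨div_dvd_of_dvd ha.1.1, hm0.ne'⟩, ?_⟩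
      rw [sq_lt_iff_lt_sq_div hm0 (div_dvd_of_dvd ha.1.1), Nat.div_div_self ha.1.1 hm0.ne']
      omega
    · exact Nat.div_div_self ha.1.1 hm0.ne'
    · exact Nat.div_div_self ha.1.1 hm0.ne'
  have := card_filter_add_card_filter_not (s := m.divisors) (fun a => a ^ 2 < m)
  omega

theorem sq_le_and_dvd_sub_iff (N n : ℕ) :
    (n + 1) ^ 2 ≤ N ∧ 2 * n + 1 ∣ N - (n + 1) ^ 2 ↔
      2 * n + 1 ∣ 4 * N - 1 ∧ (2 * n + 1) ^ 2 < 4 * N - 1 := by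
  have hsq : 4 * (n + 1) ^ 2 = (2 * n + 1) * (2 * n + 3) + 1 := by ring
  have hcop : Nat.Coprime (2 * n + 1) 4 := by
    simpa using (Nat.coprime_two_right.mpr (odd_two_mul_add_one n)).pow_right 2
  have hdvd (h : (n + 1) ^ 2 ≤ N) :
      2 * n + 1 ∣ N - (n + 1) ^ 2 ↔ 2 * n + 1 ∣ 4 * N - 1 := by
    have h4 : 4 * (N - (n + 1) ^ 2) = 4 * N - 1 - (2 * n + 1) * (2 * n + 3) := by omega
    rw [← hcop.dvd_mul_left, h4, Nat.dvd_sub_iff_left (by omega) (dvd_mul_right _ _)]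
  constructor
  · rintro ⟨hle, hdvd'⟩
    have : (2 * n + 1) ^ 2 < (2 * n + 1) * (2 * n + 3) := by nlinarith
    exact ⟨(hdvd hle).mp hdvd', by omega⟩
  · rintro ⟨⟨b, hb⟩, hlt⟩
    have hodd : Odd (4 * N - 1) := ⟨2 * N - 1, by omega⟩
    obtain ⟨k, rfl⟩ : Odd b := (Nat.odd_mul.mp (hb ▸ hodd)).2
    have hnk : n + 1 ≤ k := by nlinarith
    have hle : (n + 1) ^ 2 ≤ N := by
      have := Nat.mul_le_mul_left (2 * n + 1) (show 2 * n + 3 ≤ 2 * k + 1 by omega)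
      omega
    exact ⟨hle, (hdvd hle).mpr ⟨2 * k + 1, hb⟩⟩

theorem card_filter_sq_le_and_dvd_sub (N : ℕ) :
    #{n ∈ range (N + 1) | (n + 1) ^ 2 ≤ N ∧ 2 * n + 1 ∣ N - (n + 1) ^ 2} =
      #{a ∈ (4 * N - 1).divisors | a ^ 2 < 4 * N - 1} := by
  have hodd {a : ℕ} (ha : a ∣ 4 * N - 1 ∧ 4 * N - 1 ≠ 0) : Odd a :=
    (show Odd (4 * N - 1) from ⟨2 * N - 1, by omega⟩).of_dvd_nat ha.1
  simp_rw [sq_le_and_dvd_sub_iff]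
  refine card_nbij' (2 * · + 1) (· / 2) ?_ ?_ ?_ ?_ <;> intro a ha <;>
    simp only [coe_filter, Set.mem_ofPred_eq, Nat.mem_divisors, mem_range] at ha ⊢
  · exact ⟨⟨ha.2.1, by omega⟩, ha.2.2⟩
  · obtain ⟨k, rfl⟩ := hodd ha.1
    have hk : (2 * k + 1) / 2 = k := by omega
    have : (2 * k + 1) ^ 2 < 4 * N := by omega
    rw [hk]
    exact ⟨by nlinarith, ha.1.1, ha.2⟩
  · omega
  · obtain ⟨k, rfl⟩ := hodd ha.1
    omega

theorem two_dvd_Pv_iff {N : ℕ} (hN : 0 < N) : 2 ∣ Pv N ↔ 4 ∣ #(4 * N - 1).divisors := by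
  have hsq : ¬IsSquare (4 * N - 1) := fun ⟨r, hr⟩ => by have := Nat.mul_self_mod_eight r; omega
  have hcast : 2 ∣ Pv N ↔ (Pv N : ZMod 2) = 0 := by
    simpa using (ZMod.intCast_zmod_eq_zero_iff_dvd (Pv N) 2).symm
  rw [hcast, Pv_cast_zmod_two, ZMod.natCast_eq_zero_iff, card_filter_sq_le_and_dvd_sub,
    Nat.card_divisors_eq_two_mul_card_filter_sq_lt hsq]
  omega

theorem Nat.Prime.mod_eight_of_not_isSquare_neg_two {p : ℕ} (hp : p.Prime)
    (hqnr : ¬IsSquare (-2 : ZMod p)) : p % 8 = 5 ∨ p % 8 = 7 := by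
  have hp2 : p ≠ 2 := by rintro rfl; exact hqnr ⟨0, by decide⟩
  have := Fact.mk hp
  have := (ZMod.exists_sq_eq_neg_two_iff hp2).not.mp hqnr
  have := Nat.odd_iff.mp (hp.odd_of_ne_two hp2)
  omega

theorem four_mul_index_eq {p : ℕ} (hp : Odd p) (α n j : ℕ) :
    4 * (2 * p ^ (2 * α + 2) * n + 2 * p ^ (2 * α + 1) * j + (3 * p ^ (2 * α + 2) + 1) / 4) =
      p ^ (2 * α + 1) * (8 * (p * n + j) + 3 * p) + 1 := by
  have hsq := Nat.mul_self_mod_eight (p ^ (α + 1))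
  have hodd := Nat.odd_iff.mp (hp.pow.mul hp.pow : Odd (p ^ (α + 1) * p ^ (α + 1)))
  have h1 : p ^ (α + 1) * p ^ (α + 1) = p ^ (2 * α + 2) := by ring
  have h2 : p ^ (2 * α + 1) * (8 * (p * n + j) + 3 * p) =
      4 * (2 * p ^ (2 * α + 2) * n) + 4 * (2 * p ^ (2 * α + 1) * j) + 3 * p ^ (2 * α + 2) := by
    ring
  omega

theorem Pv_congr_zero_mod_two_general (p : ℕ) (hp : p.Prime)
    (hqnr : ¬ IsSquare (-2 : ZMod p)) (α n j : ℕ) (hj1 : 1 ≤ j) (hjp : j ≤ p - 1) :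
    Pv (2 * p ^ (2 * α + 2) * n + 2 * p ^ (2 * α + 1) * j + (3 * p ^ (2 * α + 2) + 1) / 4) ≡
      0 [ZMOD 2] := by
  have hp8 := hp.mod_eight_of_not_isSquare_neg_two hqnr
  have hpodd : Odd p := Nat.odd_iff.mpr (by omega)
  have hfour := four_mul_index_eq hpodd α n j
  set t := 8 * (p * n + j) + 3 * p
  have hpt : ¬p ∣ t := by
    intro h
    have h8j : p ∣ 8 * j :=
      (Nat.dvd_add_right (dvd_mul_right p (8 * n + 3))).mp (by convert h using 1; ring)
    have hcop : Nat.Coprime p 8 := (Nat.coprime_two_right.mpr hpodd).pow_right 3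
    have := Nat.le_of_dvd (by omega) (hcop.dvd_of_dvd_mul_left h8j)
    omega
  have htsq : ¬IsSquare t := fun ⟨r, hr⟩ => by have := Nat.mul_self_mod_eight r; omega
  apply Int.modEq_zero_iff_dvd.mpr
  rw [two_dvd_Pv_iff (by omega), show 4 * _ - 1 = p ^ (2 * α + 1) * t by omega,
    (Nat.Coprime.pow_left _ (hp.coprime_iff_not_dvd.mpr hpt)).card_divisors_mul,
    Nat.divisors_prime_pow hp, card_map, card_range,
    Nat.card_divisors_eq_two_mul_card_filter_sq_lt htsq]
  exact Dvd.intro ((α + 1) * #{a ∈ t.divisors | a ^ 2 < t}) (by ring)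

/-- For `p ≥ 3` prime with `−2` a quadratic non-residue mod `p`, for all `α, n ≥ 0` and
`1 ≤ j ≤ p−1`, `P_v(2·p^(2α+2)·n + 2·p^(2α+1)·j + (3·p^(2α+2)+1)/4) ≡ 0 (mod 2)`. -/
theorem Pv_congr_zero_mod_two (p : ℕ) (hp : p.Prime) (hp3 : 3 ≤ p)
    (hqnr : ¬ IsSquare (-2 : ZMod p)) (α n j : ℕ) (hj1 : 1 ≤ j) (hjp : j ≤ p - 1) :
    Pv (2 * p ^ (2 * α + 2) * n + 2 * p ^ (2 * α + 1) * j + (3 * p ^ (2 * α + 2) + 1) / 4) ≡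
      0 [ZMOD 2] :=
  Pv_congr_zero_mod_two_general p hp hqnr α n j hj1 hjp
end

section
/- Let μ(q) = Σ_{n≥0} (−1)^n q^{n^2} (q;q^2)_n / (−q^2;q^2)_n^2 be the second order mock theta function, with coefficients P_μ(n) given by μ(q) = Σ_{n≥0} P_μ(n) q^n, and let p_3(n) denote the number of 3-coloured partitions of n, with generating function Σ_{n≥0} p_3(n) q^n = 1/∏_{j≥1}(1−q^j)^3. Then for every n ≥ 0, P_μ(n) ≡ p_3(n) (mod 4). -/
/-- The `n`-th summand of the second order mock theta function
`μ(q) = Σ_{n≥0} (−1)^n q^(n^2) (q;q^2)_n / (−q^2;q^2)_n^2`. -/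
noncomputable def muTerm (n : ℕ) : PowerSeries ℤ :=
  (-1 : PowerSeries ℤ) ^ n * (PowerSeries.X : PowerSeries ℤ) ^ (n ^ 2)
    * (∏ j ∈ Finset.range n, (1 - (PowerSeries.X : PowerSeries ℤ) ^ (2 * j + 1)))
    * Ring.inverse
        ((∏ j ∈ Finset.range n, (1 + (PowerSeries.X : PowerSeries ℤ) ^ (2 * j + 2))) ^ 2)

/-- `Pmu N` is the coefficient of `q^N` in `μ(q)`; since the `n`-th summand has order
at least `n^2 > N` for `n > N`, the partial sum over `n ≤ N` suffices. -/
noncomputable def Pmu (N : ℕ) : ℤ :=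
  PowerSeries.coeff N (∑ n ∈ Finset.range (N + 1), muTerm n)

/-- `p3 n` is the number of 3-coloured partitions of `n`, i.e. the coefficient of `q^n` in
`1/∏_{j≥1}(1−q^j)^3`; the partial product over `1 ≤ j ≤ n+1` suffices. -/
noncomputable def p3 (n : ℕ) : ℤ :=
  PowerSeries.coeff n
    (Ring.inverse ((∏ j ∈ Finset.range (n + 1),
        (1 - (PowerSeries.X : PowerSeries ℤ) ^ (j + 1))) ^ 3))

/-!
Modulo 4 the denominator `(-q²;q²)_k²` of the `k`-th term of `μ(q)` may be replaced by
`(q²;q²)_k²`, because `∏ (1 + x_j) ≡ ∏ (1 - x_j) (mod 2)` and `a ≡ b (mod 2)` implies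
`a² ≡ b² (mod 4)`. The q-Gauss sum `∑ (-1)^k q^(k²) (q;q²)_k / (q²;q²)_k² = (q;q²)_∞ / (q²;q²)_∞`,
a limit of a terminating q-Chu–Vandermonde identity, then gives
`μ(q) ≡ (q;q²)_∞ / (q²;q²)_∞ (mod 4)`.

On the other side `(q;q²)_∞ (q;q)_∞³ = (q;q²)_∞⁴ (q²;q²)_∞³ ≡ (q²;q⁴)_∞² (q²;q²)_∞³ (mod 4)`, and
`(q²;q⁴)_∞ (q²;q²)_∞ ≡ 1 (mod 2)` since `(q;q)_∞² ≡ (q²;q²)_∞ (mod 2)`; squaring,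
`(q²;q⁴)_∞² (q²;q²)_∞² ≡ 1 (mod 4)`, so `(q;q²)_∞ / (q²;q²)_∞ ≡ 1 / (q;q)_∞³ (mod 4)`.
Everything is carried out with finite products, modulo `q^(n+1)`.
-/

open Finset PowerSeries

section QPochhammer

variable {R : Type*} [CommRing R]

/-- The q-Pochhammer symbol `(q^a; q^d)_k`. -/
def qPoch (q : R) (a d k : ℕ) : R :=
  ∏ j ∈ range k, (1 - q ^ (a + d * j))

variable (q : R) (a d : ℕ)

@[simp]
lemma qPoch_zero : qPoch q a d 0 = 1 := prod_range_zero _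

lemma qPoch_succ (k : ℕ) : qPoch q a d (k + 1) = qPoch q a d k * (1 - q ^ (a + d * k)) :=
  prod_range_succ _ _

lemma qPoch_add (k l : ℕ) : qPoch q a d (k + l) = qPoch q a d k * qPoch q (a + d * k) d l := by
  simp only [qPoch, prod_range_add, mul_add, add_assoc]

lemma qPoch_pow_base (m k : ℕ) : qPoch (q ^ m) a d k = qPoch q (m * a) (m * d) k := by
  refine prod_congr rfl fun j _ => ?_
  rw [← pow_mul, mul_add, mul_assoc]

lemma qPoch_sModEq_one (k : ℕ) : qPoch q a d k ≡ 1 [SMOD Ideal.span {q ^ a}] := by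
  rw [← prod_const_one (s := range k)]
  refine SModEq.prod fun j _ => ?_
  rw [SModEq.sub_mem, sub_sub_cancel_left, neg_mem_iff, Ideal.mem_span_singleton, pow_add]
  exact dvd_mul_right _ _

variable {q a d} in
lemma qPoch_add_sModEq {N k : ℕ} (h : N ≤ a + d * k) (l : ℕ) :
    qPoch q a d (k + l) ≡ qPoch q a d k [SMOD Ideal.span {q ^ N}] := by
  have hle : Ideal.span {q ^ (a + d * k)} ≤ Ideal.span {q ^ N} :=
    Ideal.span_singleton_le_span_singleton.mpr (pow_dvd_pow q h)
  have := (SModEq.refl (qPoch q a d k)).mul ((qPoch_sModEq_one q _ d l).mono hle)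
  rwa [mul_one, ← qPoch_add] at this

lemma qPoch_one_one_two_mul (k : ℕ) :
    qPoch q 1 1 (2 * k) = qPoch q 1 2 k * qPoch q 2 2 k := by
  induction k with
  | zero => simp
  | succ k ih =>
    rw [show 2 * (k + 1) = 2 * k + 1 + 1 by ring, qPoch_succ, qPoch_succ, ih, qPoch_succ,
      qPoch_succ]
    ring

end QPochhammer

section GaussianBinomial

variable {R : Type*} [CommRing R]

def gaussBinom (t : R) : ℕ → ℕ → R
  | 0, 0 => 1
  | 0, _ + 1 => 0
  | _ + 1, 0 => 1
  | N + 1, n + 1 => t ^ (N - n) * gaussBinom t N n + gaussBinom t N (n + 1)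

variable (t : R)

@[simp]
lemma gaussBinom_zero_right (N : ℕ) : gaussBinom t N 0 = 1 := by
  cases N <;> rfl

lemma gaussBinom_succ_succ (N n : ℕ) :
    gaussBinom t (N + 1) (n + 1) = t ^ (N - n) * gaussBinom t N n + gaussBinom t N (n + 1) :=
  rfl

lemma gaussBinom_eq_zero_of_lt {N n : ℕ} (h : N < n) : gaussBinom t N n = 0 := by
  induction N generalizing n with
  | zero =>
    obtain ⟨n, rfl⟩ := Nat.exists_eq_add_one_of_ne_zero (by omega : n ≠ 0)
    rfl
  | succ N ih =>
    obtain ⟨n, rfl⟩ := Nat.exists_eq_add_one_of_ne_zero (by omega : n ≠ 0)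
    rw [gaussBinom_succ_succ, ih (by omega), ih (by omega), mul_zero, add_zero]

lemma qPoch_mul_gaussBinom {N k : ℕ} (h : k ≤ N) :
    qPoch t 1 1 k * gaussBinom t N k = qPoch t (N + 1 - k) 1 k := by
  induction N generalizing k with
  | zero =>
    obtain rfl : k = 0 := by omega
    simp
  | succ N ih =>
    obtain _ | k := k
    · simp
    set A := qPoch t (N + 1 - k) 1 k
    have hfirst : qPoch t (N - k) 1 (k + 1) = (1 - t ^ (N - k)) * A := by
      rw [add_comm k, qPoch_add]
      simp [A, qPoch, show N - k + 1 = N + 1 - k by omega]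
    have hnext : qPoch t 1 1 (k + 1) * gaussBinom t N (k + 1) = (1 - t ^ (N - k)) * A := by
      rcases (by omega : k + 1 ≤ N ∨ k = N) with hk | rfl
      · rw [ih hk, show N + 1 - (k + 1) = N - k by omega, hfirst]
      · simp [gaussBinom_eq_zero_of_lt]
    rw [show N + 1 + 1 - (k + 1) = N + 1 - k by omega, gaussBinom_succ_succ, mul_add, hnext,
      qPoch_succ, qPoch_succ]
    have hpow : t ^ (1 + 1 * k) * t ^ (N - k) = t ^ (N + 1 - k + 1 * k) := by
      rw [← pow_add]; congr 1; omega
    linear_combination (1 - t ^ (1 + 1 * k)) * t ^ (N - k) * ih (k := k) (by omega) - A * hpow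

end GaussianBinomial

section ChuVandermonde

variable {R : Type*} [CommRing R] (q : R)

def chuTerm (M k n : ℕ) : R :=
  (-1) ^ n * q ^ (n ^ 2) * qPoch q 1 2 (n + k) * qPoch q (2 + 2 * (n + k)) 2 (M - n)

/-- For `k = 0` this is the q-Chu–Vandermonde sum with base `q²`, `b = q`, `c = q²`, cleared of
denominators; the shift `k` is what makes the induction on `M` close up. -/
def chuSum (M k : ℕ) : R :=
  ∑ n ∈ range (M + 1), chuTerm q M k n * gaussBinom (q ^ 2) M n

lemma chuTerm_succ_succ (M k n : ℕ) :
    chuTerm q (M + 1) k (n + 1) = -q ^ (2 * n + 1) * chuTerm q M (k + 1) n := by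
  rw [chuTerm, chuTerm, show n + 1 + k = n + (k + 1) by ring, Nat.add_sub_add_right,
    show (n + 1) ^ 2 = n ^ 2 + (2 * n + 1) by ring, pow_add, pow_succ (-1 : R)]
  ring

lemma chuTerm_succ_left {M n : ℕ} (h : n ≤ M) (k : ℕ) :
    chuTerm q (M + 1) k n = chuTerm q M k n * (1 - q ^ (2 * (M + k + 1))) := by
  rw [chuTerm, chuTerm, Nat.sub_add_comm h, qPoch_succ,
    show 2 + 2 * (n + k) + 2 * (M - n) = 2 * (M + k + 1) by omega]
  ring

lemma chuSum_succ (M k : ℕ) :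
    chuSum q (M + 1) k = chuSum q M k * (1 - q ^ (2 * (M + k + 1)))
      - q ^ (2 * M + 1) * chuSum q M (k + 1) := by
  have hpascal : ∀ n ∈ range (M + 1),
      chuTerm q (M + 1) k (n + 1) * gaussBinom (q ^ 2) (M + 1) (n + 1)
        = -q ^ (2 * M + 1) * (chuTerm q M (k + 1) n * gaussBinom (q ^ 2) M n)
          + chuTerm q (M + 1) k (n + 1) * gaussBinom (q ^ 2) M (n + 1) := by
    intro n hn
    have hpow : q ^ (2 * n + 1) * (q ^ 2) ^ (M - n) = q ^ (2 * M + 1) := by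
      rw [← pow_mul, ← pow_add]; congr 1; have := mem_range.mp hn; omega
    rw [gaussBinom_succ_succ, chuTerm_succ_succ]
    linear_combination -(chuTerm q M (k + 1) n * gaussBinom (q ^ 2) M n) * hpow
  have hstretch : ∀ n ∈ range (M + 1),
      chuTerm q (M + 1) k n * gaussBinom (q ^ 2) M n
        = chuTerm q M k n * gaussBinom (q ^ 2) M n * (1 - q ^ (2 * (M + k + 1))) := by
    intro n hn
    rw [chuTerm_succ_left q (Nat.lt_succ_iff.mp (mem_range.mp hn))]
    ring
  have hlow : ∑ n ∈ range (M + 1 + 1), chuTerm q (M + 1) k n * gaussBinom (q ^ 2) M n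
      = chuSum q M k * (1 - q ^ (2 * (M + k + 1))) := by
    rw [sum_range_succ, gaussBinom_eq_zero_of_lt _ (Nat.lt_succ_self M), mul_zero, add_zero,
      sum_congr rfl hstretch, ← sum_mul, chuSum]
  rw [chuSum, sum_range_succ', sum_congr rfl hpascal, sum_add_distrib, ← mul_sum, ← hlow,
    sum_range_succ' _ (M + 1), gaussBinom_zero_right, gaussBinom_zero_right, chuSum]
  ring

theorem chuSum_eq (M k : ℕ) : chuSum q M k = qPoch q 1 2 k * qPoch q 1 2 M := by
  induction M generalizing k with
  | zero => simp [chuSum, chuTerm]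
  | succ M ih =>
    have hpow : q ^ (1 + 2 * k) * q ^ (2 * M + 1) = q ^ (2 * (M + k + 1)) := by
      rw [← pow_add]; congr 1; ring
    rw [chuSum_succ, ih, ih, qPoch_succ q 1 2 k, qPoch_succ q 1 2 M]
    linear_combination qPoch q 1 2 k * qPoch q 1 2 M * hpow

end ChuVandermonde

section MockThetaTruncation

variable {R : Type*} [CommRing R] (q : R)

lemma chuTerm_mul_gaussBinom_mul_qPoch {n k : ℕ} (hk : k ≤ n) :
    chuTerm q n 0 k * gaussBinom (q ^ 2) n k * qPoch q 2 2 n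
      = (-1) ^ k * q ^ (k ^ 2) * qPoch q 1 2 k * qPoch q (2 + 2 * k) 2 (n - k) ^ 2
        * qPoch q (2 * (n + 1 - k)) 2 k := by
  have hsplit : qPoch q 2 2 n = qPoch q 2 2 k * qPoch q (2 + 2 * k) 2 (n - k) := by
    rw [← qPoch_add, Nat.add_sub_cancel' hk]
  have hbinom : qPoch q 2 2 k * gaussBinom (q ^ 2) n k = qPoch q (2 * (n + 1 - k)) 2 k := by
    have := qPoch_mul_gaussBinom (q ^ 2) hk
    rwa [qPoch_pow_base, qPoch_pow_base, mul_one] at this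
  rw [hsplit, chuTerm, add_zero, ← hbinom]
  ring

lemma pow_sq_mul_qPoch_sModEq {n k : ℕ} (hk : k ≤ n) :
    q ^ (k ^ 2) * qPoch q (2 * (n + 1 - k)) 2 k ≡ q ^ (k ^ 2) [SMOD Ideal.span {q ^ (n + 1)}] := by
  have hdvd := SModEq.sub_mem.mp (qPoch_sModEq_one q (2 * (n + 1 - k)) 2 k)
  rw [Ideal.mem_span_singleton] at hdvd
  rw [SModEq.sub_mem, Ideal.mem_span_singleton, ← mul_sub_one]
  have hexp : n + 1 ≤ k ^ 2 + 2 * (n + 1 - k) := by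
    rcases k with _ | k
    · omega
    · have : (k + 1) ^ 2 = k ^ 2 + 2 * k + 1 := by ring
      omega
  exact (pow_dvd_pow q hexp).trans (pow_add q _ _ ▸ mul_dvd_mul_left _ hdvd)

theorem sum_mul_qPoch_sq_sModEq (n : ℕ) :
    ∑ k ∈ range (n + 1), (-1) ^ k * q ^ (k ^ 2) * qPoch q 1 2 k * qPoch q (2 + 2 * k) 2 (n - k) ^ 2
      ≡ qPoch q 1 2 n * qPoch q 2 2 n [SMOD Ideal.span {q ^ (n + 1)}] := by
  have hchu : chuSum q n 0 = qPoch q 1 2 n := by simp [chuSum_eq]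
  rw [← hchu, chuSum, sum_mul]
  refine SModEq.sum fun k hk => ?_
  have hk : k ≤ n := Nat.lt_succ_iff.mp (mem_range.mp hk)
  rw [chuTerm_mul_gaussBinom_mul_qPoch q hk]
  have := (SModEq.refl ((-1) ^ k * qPoch q 1 2 k * qPoch q (2 + 2 * k) 2 (n - k) ^ 2)).mul
    (pow_sq_mul_qPoch_sModEq q hk)
  convert this.symm using 1 <;> ring

end MockThetaTruncation

section ModFour

variable {R : Type*} [CommRing R]

lemma sq_sModEq_sq_of_sModEq {J : Ideal R} {a b : R} (h : a ≡ b [SMOD Ideal.span {2} ⊔ J]) :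
    a ^ 2 ≡ b ^ 2 [SMOD Ideal.span {4} ⊔ J] := by
  obtain ⟨x, hx, y, hy, hxy⟩ := Submodule.mem_sup.mp (SModEq.sub_mem.mp h)
  obtain ⟨c, rfl⟩ := Ideal.mem_span_singleton.mp hx
  refine SModEq.sub_mem.mpr (Submodule.mem_sup.mpr ⟨4 * (c * (b + c)),
    Ideal.mem_span_singleton.mpr (dvd_mul_right _ _), y * (a + b + 2 * c),
    J.mul_mem_right _ hy, ?_⟩)
  linear_combination (a + b + 2 * c) * hxy

lemma prod_one_add_sModEq_prod_one_sub {ι : Type*} (s : Finset ι) (f : ι → R) :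
    ∏ i ∈ s, (1 + f i) ≡ ∏ i ∈ s, (1 - f i) [SMOD Ideal.span {2}] := by
  refine SModEq.prod fun i _ => SModEq.sub_mem.mpr (Ideal.mem_span_singleton.mpr ⟨f i, ?_⟩)
  ring

variable (q : R)

lemma qPoch_sq_sModEq (a d k : ℕ) :
    qPoch q a d k ^ 2 ≡ qPoch q (2 * a) (2 * d) k [SMOD Ideal.span {2}] := by
  rw [qPoch, ← prod_pow]
  refine SModEq.prod fun j _ => SModEq.sub_mem.mpr (Ideal.mem_span_singleton.mpr ?_)
  refine ⟨q ^ (2 * (a + d * j)) - q ^ (a + d * j), ?_⟩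
  rw [show 2 * a + 2 * d * j = 2 * (a + d * j) by ring, pow_mul']
  ring

lemma qPoch_two_four_mul_sq_sModEq (K : ℕ) :
    qPoch q 2 4 K * qPoch q 2 2 K ^ 2 ≡ qPoch q 2 2 K [SMOD Ideal.span {2} ⊔ Ideal.span {q ^ K}] :=
  calc qPoch q 2 4 K * qPoch q 2 2 K ^ 2
      ≡ qPoch q 1 2 K ^ 2 * qPoch q 2 2 K ^ 2 [SMOD Ideal.span {2} ⊔ Ideal.span {q ^ K}] :=
        ((qPoch_sq_sModEq q 1 2 K).symm.mono le_sup_left).mul SModEq.rfl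
    _ = qPoch q 1 1 (2 * K) ^ 2 := by rw [qPoch_one_one_two_mul, mul_pow]
    _ ≡ qPoch q 2 2 (K + K) [SMOD Ideal.span {2} ⊔ Ideal.span {q ^ K}] := by
        rw [← two_mul]; exact (qPoch_sq_sModEq q 1 1 _).mono le_sup_left
    _ ≡ qPoch q 2 2 K [SMOD Ideal.span {2} ⊔ Ideal.span {q ^ K}] :=
        (qPoch_add_sModEq (by omega) K).mono le_sup_right

end ModFour

lemma SModEq.of_mul_right_of_isUnit {A : Type*} [CommRing A] {I : Ideal A} {a b u : A}
    (hu : IsUnit u) (h : a * u ≡ b * u [SMOD I]) : a ≡ b [SMOD I] := by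
  obtain ⟨v, hv⟩ := hu.exists_right_inv
  simpa only [mul_assoc, hv, mul_one] using h.mul (SModEq.refl v)

section PowerSeries

variable {R : Type*} [CommRing R]

lemma isUnit_qPoch_X {a : ℕ} (ha : a ≠ 0) (d k : ℕ) : IsUnit (qPoch (X : R⟦X⟧) a d k) :=
  IsUnit.prod_iff.mpr fun j _ => isUnit_iff_constantCoeff.mpr (by simp [ha])

lemma qPoch_two_four_mul_qPoch_sq_sModEq_one (K : ℕ) :
    (qPoch (X : R⟦X⟧) 2 4 K * qPoch X 2 2 K) ^ 2
      ≡ 1 [SMOD Ideal.span {4} ⊔ Ideal.span {X ^ K}] := by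
  have h : qPoch (X : R⟦X⟧) 2 4 K * qPoch X 2 2 K
      ≡ 1 [SMOD Ideal.span {2} ⊔ Ideal.span {X ^ K}] := by
    refine SModEq.of_mul_right_of_isUnit (isUnit_qPoch_X two_ne_zero 2 K) ?_
    simpa only [mul_assoc, one_mul, ← sq] using qPoch_two_four_mul_sq_sModEq X K
  simpa only [one_pow] using sq_sModEq_sq_of_sModEq h

theorem qPoch_mul_qPoch_pow_three_sModEq (n : ℕ) :
    qPoch (X : R⟦X⟧) 1 2 n * qPoch X 1 1 (n + 1) ^ 3
      ≡ qPoch X 2 2 n [SMOD Ideal.span {4} ⊔ Ideal.span {X ^ (n + 1)}] := by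
  set I : Ideal R⟦X⟧ := Ideal.span {4} ⊔ Ideal.span {X ^ (n + 1)}
  have ha : qPoch (X : R⟦X⟧) 1 2 n ≡ qPoch X 1 2 (n + 1) [SMOD I] :=
    ((qPoch_add_sModEq (by omega) 1).symm).mono le_sup_right
  have hv : qPoch (X : R⟦X⟧) 1 1 (n + 1) ≡ qPoch X 1 2 (n + 1) * qPoch X 2 2 (n + 1) [SMOD I] := by
    rw [← qPoch_one_one_two_mul, two_mul]
    exact ((qPoch_add_sModEq (by omega) _).symm).mono le_sup_right
  have he : qPoch (X : R⟦X⟧) 2 2 (n + 1) ≡ qPoch X 2 2 n [SMOD I] :=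
    (qPoch_add_sModEq (by omega) 1).mono le_sup_right
  have h4 : (qPoch (X : R⟦X⟧) 1 2 (n + 1) ^ 2) ^ 2 ≡ qPoch X 2 4 (n + 1) ^ 2 [SMOD I] :=
    sq_sModEq_sq_of_sModEq ((qPoch_sq_sModEq X 1 2 _).mono le_sup_left)
  calc qPoch (X : R⟦X⟧) 1 2 n * qPoch X 1 1 (n + 1) ^ 3
      ≡ qPoch X 1 2 (n + 1) * (qPoch X 1 2 (n + 1) * qPoch X 2 2 (n + 1)) ^ 3 [SMOD I] :=
        ha.mul (hv.pow 3)
    _ = (qPoch X 1 2 (n + 1) ^ 2) ^ 2 * qPoch X 2 2 (n + 1) ^ 3 := by ring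
    _ ≡ qPoch X 2 4 (n + 1) ^ 2 * qPoch X 2 2 (n + 1) ^ 3 [SMOD I] := h4.mul SModEq.rfl
    _ = (qPoch X 2 4 (n + 1) * qPoch X 2 2 (n + 1)) ^ 2 * qPoch X 2 2 (n + 1) := by ring
    _ ≡ 1 * qPoch X 2 2 (n + 1) [SMOD I] :=
        (qPoch_two_four_mul_qPoch_sq_sModEq_one (R := R) (n + 1)).mul SModEq.rfl
    _ ≡ qPoch X 2 2 n [SMOD I] := by rw [one_mul]; exact he

end PowerSeries

lemma muTerm_mul_qPoch_sq_sModEq (k : ℕ) :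
    muTerm k * qPoch (X : ℤ⟦X⟧) 2 2 k ^ 2 ≡ (-1) ^ k * X ^ (k ^ 2) * qPoch X 1 2 k
      [SMOD Ideal.span {4}] := by
  set D := ∏ j ∈ range k, (1 + (X : ℤ⟦X⟧) ^ (2 * j + 2))
  have hD : D ^ 2 ≡ qPoch X 2 2 k ^ 2 [SMOD Ideal.span {4}] := by
    have h := prod_one_add_sModEq_prod_one_sub (range k) fun j => (X : ℤ⟦X⟧) ^ (2 * j + 2)
    have hprod : ∏ j ∈ range k, (1 - (X : ℤ⟦X⟧) ^ (2 * j + 2)) = qPoch X 2 2 k := by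
      simp only [qPoch, add_comm 2, mul_comm 2]
    rw [hprod] at h
    exact (sq_sModEq_sq_of_sModEq (J := ⊥) (h.mono le_sup_left)).mono (sup_le le_rfl bot_le)
  have hDunit : IsUnit (D ^ 2) :=
    (IsUnit.prod_iff.mpr fun j _ => isUnit_iff_constantCoeff.mpr (by simp)).pow 2
  have hinv : Ring.inverse (D ^ 2) * qPoch X 2 2 k ^ 2 ≡ 1 [SMOD Ideal.span {4}] := by
    rw [← Ring.inverse_mul_cancel _ hDunit]
    exact SModEq.rfl.mul hD.symm
  have hnum : ∏ j ∈ range k, (1 - (X : ℤ⟦X⟧) ^ (2 * j + 1)) = qPoch X 1 2 k := by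
    simp only [qPoch, add_comm 1, mul_comm 2]
  have hmu : muTerm k * qPoch X 2 2 k ^ 2
      = (-1) ^ k * X ^ (k ^ 2) * qPoch X 1 2 k * (Ring.inverse (D ^ 2) * qPoch X 2 2 k ^ 2) := by
    rw [muTerm, hnum]
    ring
  rw [hmu]
  simpa only [mul_one] using (SModEq.refl ((-1) ^ k * X ^ (k ^ 2) * qPoch X 1 2 k)).mul hinv

lemma sum_muTerm_mul_qPoch_sq_sModEq (n : ℕ) :
    (∑ k ∈ range (n + 1), muTerm k) * qPoch (X : ℤ⟦X⟧) 2 2 n ^ 2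
      ≡ qPoch X 1 2 n * qPoch X 2 2 n [SMOD Ideal.span {4} ⊔ Ideal.span {X ^ (n + 1)}] := by
  rw [sum_mul]
  refine (SModEq.sum fun k hk => ?_).trans ((sum_mul_qPoch_sq_sModEq X n).mono le_sup_right)
  have hsplit : qPoch (X : ℤ⟦X⟧) 2 2 n = qPoch X 2 2 k * qPoch X (2 + 2 * k) 2 (n - k) := by
    rw [← qPoch_add, Nat.add_sub_cancel' (Nat.lt_succ_iff.mp (mem_range.mp hk))]
  have := ((muTerm_mul_qPoch_sq_sModEq k).mul
    (SModEq.refl (qPoch X (2 + 2 * k) 2 (n - k) ^ 2))).mono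
    (le_sup_left : Ideal.span {4} ≤ Ideal.span {4} ⊔ Ideal.span {(X : ℤ⟦X⟧) ^ (n + 1)})
  rwa [mul_assoc, ← mul_pow, ← hsplit] at this

lemma coeff_modEq_of_sModEq {m : ℤ} {n : ℕ} {F G : ℤ⟦X⟧}
    (h : F ≡ G [SMOD Ideal.span {(m : ℤ⟦X⟧)} ⊔ Ideal.span {X ^ (n + 1)}]) :
    coeff n F ≡ coeff n G [ZMOD m] := by
  obtain ⟨_, ha, _, hb, hab⟩ := Submodule.mem_sup.mp (SModEq.sub_mem.mp h)
  obtain ⟨a, rfl⟩ := Ideal.mem_span_singleton.mp ha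
  obtain ⟨b, rfl⟩ := Ideal.mem_span_singleton.mp hb
  have hcoeff : coeff n F - coeff n G = m * coeff n a := by
    rw [← map_sub, ← hab, map_add, coeff_X_pow_mul', if_neg (by omega), add_zero,
      ← map_intCast (C (R := ℤ)), coeff_C_mul, Int.cast_id]
  exact (Int.modEq_iff_dvd.mpr ⟨-coeff n a, by linear_combination -hcoeff⟩)

/-- `P_μ(n) ≡ p_3(n) (mod 4)` for every `n ≥ 0`. -/
theorem Pmu_congr_p3 (n : ℕ) : Pmu n ≡ p3 n [ZMOD 4] := by
  set I : Ideal ℤ⟦X⟧ := Ideal.span {4} ⊔ Ideal.span {X ^ (n + 1)}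
  set e := qPoch (X : ℤ⟦X⟧) 2 2 n
  set v := qPoch (X : ℤ⟦X⟧) 1 1 (n + 1)
  have hv : IsUnit (v ^ 3) := (isUnit_qPoch_X one_ne_zero 1 _).pow 3
  have hp3 : ∏ j ∈ range (n + 1), (1 - (X : ℤ⟦X⟧) ^ (j + 1)) = v := by
    simp only [v, qPoch, one_mul, add_comm 1]
  have hmu : (∑ k ∈ range (n + 1), muTerm k) ≡ Ring.inverse (v ^ 3) [SMOD I] := by
    refine SModEq.of_mul_right_of_isUnit ((isUnit_qPoch_X two_ne_zero 2 n).pow 2) ?_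
    calc (∑ k ∈ range (n + 1), muTerm k) * e ^ 2
        ≡ qPoch X 1 2 n * e [SMOD I] := sum_muTerm_mul_qPoch_sq_sModEq n
      _ = qPoch X 1 2 n * v ^ 3 * e * Ring.inverse (v ^ 3) := by
          linear_combination -(qPoch X 1 2 n * e) * Ring.mul_inverse_cancel _ hv
      _ ≡ e * e * Ring.inverse (v ^ 3) [SMOD I] :=
          ((qPoch_mul_qPoch_pow_three_sModEq (R := ℤ) n).mul SModEq.rfl).mul SModEq.rfl
      _ = Ring.inverse (v ^ 3) * e ^ 2 := by ring
  rw [Pmu, p3, hp3]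
  exact coeff_modEq_of_sModEq (m := 4) (by exact_mod_cast hmu)
end
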